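/- Every identity u ≈ v satisfied by the monoid M(a²b²) with con(u) = con(v) and in which each variable occurs exactly twice on both sides satisfies property P_{(1 ≤ 2, 2 ≤ 2)}: for all variables x, y occurring twice in u and v, the first occurrence of x precedes the second occurrence of y in u if and only if the first occurrence of x precedes the second occurrence of y in v. -/

import Mathlib

open scoped Classical

def Fac (W : Set (List ℕ)) (u : List ℕ) : Prop := u = [] ∨ ∃ w ∈ W, u <:+: w

lemma Fac.of_infix {W : Set (List ℕ)} {u v : List ℕ} (h : Fac W u) (hv : v <:+: u) :
    Fac W v := by
  rcases h with rfl | ⟨w, hw, hu⟩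
  · left; simpa using hv
  · exact Or.inr ⟨w, hw, hv.trans hu⟩

def MWord (W : Set (List ℕ)) : Type := Option {u : List ℕ // Fac W u}

noncomputable def mwMul {W : Set (List ℕ)} : MWord W → MWord W → MWord W
  | some a, some b =>
      if h : Fac W (a.1 ++ b.1) then some ⟨a.1 ++ b.1, h⟩ else none
  | _, _ => none

lemma mwMul_none_left {W : Set (List ℕ)} (b : MWord W) : mwMul none b = none := by
  cases b <;> rfl

lemma mwMul_none_right {W : Set (List ℕ)} (a : MWord W) : mwMul a none = none := by
  cases a <;> rfl

lemma mwMul_some_some {W : Set (List ℕ)} (a b : {u : List ℕ // Fac W u}) :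
    mwMul (some a) (some b) =
      if h : Fac W (a.1 ++ b.1) then some ⟨a.1 ++ b.1, h⟩ else none := rfl

noncomputable instance MWord.monoid (W : Set (List ℕ)) : Monoid (MWord W) where
  mul := mwMul
  one := some ⟨[], Or.inl rfl⟩
  one_mul a := by
    show mwMul (some ⟨[], Or.inl rfl⟩) a = a
    cases a with
    | none => rfl
    | some a => exact dif_pos a.2
  mul_one a := by
    show mwMul a (some ⟨[], Or.inl rfl⟩) = a
    cases a with
    | none => rfl
    | some a =>
      have h : Fac W (a.1 ++ []) := by simpa using a.2
      rw [mwMul_some_some, dif_pos h]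
      exact congrArg some (Subtype.ext (List.append_nil _))
  mul_assoc a b c := by
    show mwMul (mwMul a b) c = mwMul a (mwMul b c)
    cases a with
    | none => simp [mwMul_none_left]; rfl
    | some a =>
      cases b with
      | none => erw [mwMul_none_right, mwMul_none_left]
      | some b =>
        cases c with
        | none => erw [mwMul_none_right, mwMul_none_right]
        | some c =>
          by_cases hab : Fac W (a.1 ++ b.1)
          · by_cases hbc : Fac W (b.1 ++ c.1)
            · rw [mwMul_some_some b c, dif_pos hbc, mwMul_some_some a b, dif_pos hab,
                mwMul_some_some, mwMul_some_some]
              by_cases habc : Fac W (a.1 ++ b.1 ++ c.1)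
              · have habc' : Fac W (a.1 ++ (b.1 ++ c.1)) := by
                  rwa [← List.append_assoc]
                rw [dif_pos habc, dif_pos habc']
                exact congrArg some (Subtype.ext (List.append_assoc _ _ _))
              · have habc' : ¬ Fac W (a.1 ++ (b.1 ++ c.1)) := by
                  rwa [← List.append_assoc]
                rw [dif_neg habc, dif_neg habc']
            · rw [mwMul_some_some b c, dif_neg hbc]
              erw [mwMul_none_right]
              rw [mwMul_some_some a b, dif_pos hab, mwMul_some_some]
              have : ¬ Fac W (a.1 ++ b.1 ++ c.1) := fun h =>
                hbc (h.of_infix (by rw [List.append_assoc]; exact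
                  (List.suffix_append a.1 (b.1 ++ c.1)).isInfix))
              rw [dif_neg this]
          · rw [mwMul_some_some a b, dif_neg hab]
            erw [mwMul_none_left]
            cases hc : mwMul (some b) (some c) with
            | none => erw [mwMul_none_right]
            | some bc =>
              rw [mwMul_some_some]
              have hbc : bc.1 = b.1 ++ c.1 := by
                rw [mwMul_some_some] at hc
                by_cases h : Fac W (b.1 ++ c.1)
                · rw [dif_pos h] at hc; cases hc; rfl
                · rw [dif_neg h] at hc; cases hc
              have : ¬ Fac W (a.1 ++ bc.1) := by
                rw [hbc]
                exact fun h => hab (h.of_infix (by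
                  rw [← List.append_assoc]
                  exact (List.prefix_append (a.1 ++ b.1) c.1).isInfix))
              rw [dif_neg this]

/-- A monoid `M` satisfies the identity `u ≈ v` if every substitution of elements of
`M` for the variables makes the two sides equal. -/
def SatM (M : Type*) [Monoid M] (u v : List ℕ) : Prop :=
  ∀ f : ℕ → M, (u.map f).prod = (v.map f).prod

/-- The position (index) in `u` of the `i`-th (1-indexed) occurrence of the
variable `x`; equals `u.length` if there is no such occurrence. -/
def nthOccPos (u : List ℕ) (x i : ℕ) : ℕ :=
  ((List.range u.length).filter (fun k => u[k]? == some x)).getD (i - 1) u.length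

/-- `(ᵢx) <_u (ⱼy)` : the `i`-th occurrence of `x` precedes the `j`-th occurrence
of `y` in the word `u`. -/
def Precedes (u : List ℕ) (x i y j : ℕ) : Prop := nthOccPos u x i < nthOccPos u y j


/-! The substitution `y ↦ a`, `x ↦ b`, every other variable `↦ 1` sends a word in which `x` and `y`
occur twice each to `a²b²` exactly when both occurrences of `y` come before the first occurrence of
`x`, i.e. when `(₁x) <_u (₂y)` fails; otherwise its value has a factor `ba` and is `0`. Since
`a²b² ≠ 0` in `M(a²b²)`, an identity of `M(a²b²)` transports this event from `u` to `v` and back. -/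

namespace MWord

variable {W : Set (List ℕ)}

noncomputable def ofList (W : Set (List ℕ)) (w : List ℕ) : MWord W :=
  if h : Fac W w then some ⟨w, h⟩ else none

lemma ofList_of_fac {w : List ℕ} (h : Fac W w) : ofList W w = some ⟨w, h⟩ := dif_pos h

lemma ofList_of_not_fac {w : List ℕ} (h : ¬ Fac W w) : ofList W w = none := dif_neg h

lemma ofList_append (s t : List ℕ) : ofList W (s ++ t) = ofList W s * ofList W t := by
  show ofList W (s ++ t) = mwMul (ofList W s) (ofList W t)
  by_cases hs : Fac W s
  · by_cases ht : Fac W t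
    · rw [ofList_of_fac hs, ofList_of_fac ht, mwMul_some_some]
      rfl
    · rw [ofList_of_not_fac ht, mwMul_none_right,
        ofList_of_not_fac fun h => ht (h.of_infix (List.suffix_append s t).isInfix)]
  · rw [ofList_of_not_fac hs, mwMul_none_left,
      ofList_of_not_fac fun h => hs (h.of_infix (List.prefix_append s t).isInfix)]

lemma prod_map_ofList (δ : ℕ → List ℕ) (u : List ℕ) :
    (u.map fun z => ofList W (δ z)).prod = ofList W (u.flatMap δ) := by
  induction u with
  | nil => exact (ofList_of_fac (Or.inl rfl)).symm
  | cons a u ih => rw [List.map_cons, List.prod_cons, ih, List.flatMap_cons, ofList_append]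

lemma eq_of_ofList_eq {s t : List ℕ} (hs : Fac W s) (h : ofList W s = ofList W t) : t = s := by
  rw [ofList_of_fac hs] at h
  by_cases ht : Fac W t
  · rw [ofList_of_fac ht] at h
    exact congrArg Subtype.val (Option.some.inj h).symm
  · rw [ofList_of_not_fac ht] at h
    exact absurd h (Option.some_ne_none _)

end MWord

lemma SatM.symm {M : Type*} [Monoid M] {u v : List ℕ} (h : SatM M u v) : SatM M v u :=
  fun f => (h f).symm

lemma SatM.flatMap_eq_of_fac {W : Set (List ℕ)} {u v : List ℕ} (h : SatM (MWord W) u v)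
    (δ : ℕ → List ℕ) (hu : Fac W (u.flatMap δ)) : v.flatMap δ = u.flatMap δ := by
  have := h fun z => MWord.ofList W (δ z)
  rw [MWord.prod_map_ofList, MWord.prod_map_ofList] at this
  exact MWord.eq_of_ofList_eq hu this

section Occurrences

variable {u : List ℕ} {x y : ℕ}

lemma nthOccPos_cons_self_one (x : ℕ) (u : List ℕ) : nthOccPos (x :: u) x 1 = 0 := by
  simp [nthOccPos, List.range_succ_eq_map]

lemma nthOccPos_cons_self_succ_succ (x : ℕ) (u : List ℕ) (i : ℕ) :
    nthOccPos (x :: u) x (i + 2) = nthOccPos u x (i + 1) + 1 := by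
  simp [nthOccPos, List.range_succ_eq_map, List.filter_map, Function.comp_def]

lemma nthOccPos_cons_of_ne {a : ℕ} (hax : a ≠ x) (u : List ℕ) (i : ℕ) :
    nthOccPos (a :: u) x (i + 1) = nthOccPos u x (i + 1) + 1 := by
  simp [nthOccPos, List.range_succ_eq_map, List.filter_map, Function.comp_def, hax]

lemma nthOccPos_one (u : List ℕ) (x : ℕ) : nthOccPos u x 1 = u.idxOf x := by
  induction u with
  | nil => rfl
  | cons a u ih =>
    rcases eq_or_ne a x with rfl | hax
    · rw [nthOccPos_cons_self_one, List.idxOf_cons_self]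
    · rw [nthOccPos_cons_of_ne hax, ih, List.idxOf_cons_ne _ hax]

lemma nthOccPos_append_of_not_mem {s : List ℕ} (hs : x ∉ s) (t : List ℕ) (i : ℕ) :
    nthOccPos (s ++ t) x (i + 1) = s.length + nthOccPos t x (i + 1) := by
  induction s with
  | nil => simp
  | cons a s ih =>
    rw [List.mem_cons, not_or] at hs
    rw [List.cons_append, nthOccPos_cons_of_ne (Ne.symm hs.1), ih hs.2, List.length_cons]
    omega

lemma nthOccPos_two_eq {a b : List ℕ} (ha : y ∉ a) (hb : y ∉ b) (c : List ℕ) :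
    nthOccPos (a ++ y :: b ++ y :: c) y 2 = (a ++ y :: b).length := by
  rw [List.append_assoc, nthOccPos_append_of_not_mem ha, List.cons_append,
    nthOccPos_cons_self_succ_succ, nthOccPos_append_of_not_mem hb, nthOccPos_cons_self_one]
  simp

lemma exists_eq_append_cons_append_cons (hy : u.count y = 2) :
    ∃ a b c, u = a ++ y :: b ++ y :: c ∧ y ∉ a ∧ y ∉ b ∧ y ∉ c := by
  obtain ⟨a, r, ha, rfl, -⟩ :=
    List.exists_erase_eq (List.count_pos_iff.1 (by omega : 0 < u.count y))
  have hr : r.count y = 1 := by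
    rw [List.count_append, List.count_eq_zero.2 ha, List.count_cons_self] at hy
    omega
  obtain ⟨b, c, hb, rfl, -⟩ :=
    List.exists_erase_eq (List.count_pos_iff.1 (by omega : 0 < r.count y))
  have hc : c.count y = 0 := by
    rw [List.count_append, List.count_eq_zero.2 hb, List.count_cons_self] at hr
    omega
  exact ⟨a, b, c, by simp only [List.append_assoc, List.cons_append], ha, hb,
    List.count_eq_zero.1 hc⟩

lemma precedes_one_two_iff {a b : List ℕ} (ha : y ∉ a) (hb : y ∉ b) (c : List ℕ) :
    Precedes (a ++ y :: b ++ y :: c) x 1 y 2 ↔ x ∈ a ++ y :: b := by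
  have hpre : a ++ y :: b <+: a ++ y :: b ++ y :: c := List.prefix_append _ _
  rw [Precedes, nthOccPos_one, nthOccPos_two_eq ha hb, hpre.mem_iff_idxOf_lt_length]

lemma precedes_one_two_self (hx : u.count x = 2) : Precedes u x 1 x 2 := by
  obtain ⟨a, b, c, rfl, ha, hb, -⟩ := exists_eq_append_cons_append_cons hx
  rw [precedes_one_two_iff ha hb]
  simp

end Occurrences

section Substitution

def substAB (p q z : ℕ) : List ℕ := if z = p then [0] else if z = q then [1] else []

lemma flatMap_substAB_of_not_mem {p : ℕ} (q : ℕ) {w : List ℕ} (hw : p ∉ w) :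
    w.flatMap (substAB p q) = List.replicate (w.count q) 1 := by
  induction w with
  | nil => rfl
  | cons z w ih =>
    rw [List.mem_cons, not_or] at hw
    rw [List.flatMap_cons, ih hw.2, List.count_cons, substAB, if_neg (Ne.symm hw.1)]
    by_cases hz : z = q <;> simp [hz, List.replicate_succ]

lemma replicate_one_zero_eq_aabb_iff (m n k : ℕ) :
    List.replicate m 1 ++ 0 :: (List.replicate n 1 ++ 0 :: List.replicate k 1) = [0, 0, 1, 1] ↔
      m = 0 ∧ n = 0 ∧ k = 2 := by
  have hk : List.replicate k 1 = [1, 1] ↔ k = 2 := by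
    rw [eq_comm, List.eq_replicate_iff]
    simp [eq_comm]
  rcases m with _ | m <;> rcases n with _ | n <;> simp [List.replicate_succ, hk]

variable {x y : ℕ}

lemma flatMap_substAB_eq_aabb_iff (hxy : x ≠ y) {a b c : List ℕ} (ha : y ∉ a) (hb : y ∉ b)
    (hc : y ∉ c) (hx : (a ++ y :: b ++ y :: c).count x = 2) :
    (a ++ y :: b ++ y :: c).flatMap (substAB y x) = [0, 0, 1, 1] ↔ x ∉ a ++ y :: b := by
  have hyy : substAB y x y = [0] := if_pos rfl
  simp only [List.count_append, List.count_cons_of_ne hxy.symm] at hx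
  rw [List.flatMap_append, List.flatMap_cons, List.flatMap_append, List.flatMap_cons, hyy,
    flatMap_substAB_of_not_mem x ha, flatMap_substAB_of_not_mem x hb,
    flatMap_substAB_of_not_mem x hc]
  simp only [List.append_assoc, List.cons_append, List.nil_append]
  rw [replicate_one_zero_eq_aabb_iff]
  simp only [List.mem_append, List.mem_cons, hxy, false_or, not_or, ← List.count_eq_zero]
  omega

lemma not_precedes_iff_flatMap_substAB_eq_aabb (hxy : x ≠ y) {u : List ℕ} (hx : u.count x = 2)
    (hy : u.count y = 2) : ¬ Precedes u x 1 y 2 ↔ u.flatMap (substAB y x) = [0, 0, 1, 1] := by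
  obtain ⟨a, b, c, rfl, ha, hb, hc⟩ := exists_eq_append_cons_append_cons hy
  rw [precedes_one_two_iff ha hb, flatMap_substAB_eq_aabb_iff hxy ha hb hc hx]

end Substitution

theorem MWord_aabb_propP_general (u v : List ℕ)
    (hsat : SatM (MWord ({[0, 0, 1, 1]} : Set (List ℕ))) u v) :
    ∀ x y : ℕ, u.count x = 2 → v.count x = 2 → u.count y = 2 → v.count y = 2 →
      (Precedes u x 1 y 2 ↔ Precedes v x 1 y 2) := by
  intro x y hux hvx huy hvy
  rcases eq_or_ne x y with rfl | hxy
  · exact iff_of_true (precedes_one_two_self hux) (precedes_one_two_self hvx)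
  have haabb : Fac {[0, 0, 1, 1]} [0, 0, 1, 1] := Or.inr ⟨_, rfl, List.infix_refl _⟩
  rw [← not_iff_not, not_precedes_iff_flatMap_substAB_eq_aabb hxy hux huy,
    not_precedes_iff_flatMap_substAB_eq_aabb hxy hvx hvy]
  exact ⟨fun h => (hsat.flatMap_eq_of_fac _ (h ▸ haabb)).trans h,
    fun h => (hsat.symm.flatMap_eq_of_fac _ (h ▸ haabb)).trans h⟩

/-- Every identity `u ≈ v` of `M(a²b²)` (here `a = 0`, `b = 1`, so `a²b² = [0,0,1,1]`)
with `con u = con v` in which every variable occurs exactly twice on both sides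
satisfies property `P_{(1 ≤ 2, 2 ≤ 2)}`: for all variables `x, y` occurring twice,
the first occurrence of `x` precedes the second occurrence of `y` in `u` iff it
does in `v`. -/
theorem MWord_aabb_propP (u v : List ℕ)
    (hsat : SatM (MWord ({[0, 0, 1, 1]} : Set (List ℕ))) u v)
    (hcon : ∀ x : ℕ, x ∈ u ↔ x ∈ v)
    (hu2 : ∀ x ∈ u, u.count x = 2) (hv2 : ∀ x ∈ v, v.count x = 2) :
    ∀ x y : ℕ, u.count x = 2 → v.count x = 2 → u.count y = 2 → v.count y = 2 →
      (Precedes u x 1 y 2 ↔ Precedes v x 1 y 2) :=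
  MWord_aabb_propP_general u v hsat
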